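/- arXiv:1204.6723 — 2 statements merged into one kernel-verified Lean document; each statement's English description precedes it below -/
import Mathlib

section
/- Let K be a loop-free unital free augmented directed complex, let x ∈ νK and let α be a sign. Then x_1^α is a sum of distinct 1-dimensional basis elements which can be enumerated as a_1, …, a_k in such a way that ∂⁻a_1 = x_0^−, ∂⁺a_i = ∂⁻a_{i+1} for 1 ≤ i < k, and ∂⁺a_k = x_0^+ (each ∂⁻a_i and ∂⁺a_i being a single basis element), and the k+1 basis elements x_0^−, ∂⁺a_1, …, ∂⁺a_k are pairwise distinct and are exactly the terms of g_0^α(x). (In other words, the network G_0^α(x) is linear.) -/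
open Finsupp

/-- A free augmented directed complex, encoded by its distinguished graded basis:
`B` is the set of basis elements, `dim` the dimension function, `bd a` the boundary
chain of a basis element `a`, and `eps` the augmentation (supported in dimension 0). -/
structure FADC where
  B : Type
  dim : B → ℕ
  bd : B → (B →₀ ℤ)
  eps : B → ℤ
  bd_dim : ∀ a b, b ∈ (bd a).support → dim b + 1 = dim a
  eps_dim : ∀ b, 0 < dim b → eps b = 0
  bd_bd : ∀ a : B, ((bd a).sum fun b n => n • bd b) = 0
  eps_bd : ∀ a : B, ((bd a).sum fun b n => n * eps b) = 0

namespace FADC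

variable (K : FADC)

/-- The boundary homomorphism `∂`, extended to chains. -/
noncomputable def bdc (c : K.B →₀ ℤ) : K.B →₀ ℤ := c.sum fun b n => n • K.bd b

/-- The augmentation `ε`, extended to chains. -/
noncomputable def epsc (c : K.B →₀ ℤ) : ℤ := c.sum fun b n => n * K.eps b

/-- `∂⁺c`, the positive part of `∂c`. -/
noncomputable def bdp (c : K.B →₀ ℤ) : K.B →₀ ℤ := (K.bdc c).mapRange (fun n => max n 0) (by simp)

/-- `∂⁻c`, the negative part of `∂c`. -/
noncomputable def bdm (c : K.B →₀ ℤ) : K.B →₀ ℤ := (-K.bdc c).mapRange (fun n => max n 0) (by simp)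

/-- `K` is unital if `ε((∂⁻)^q a) = ε((∂⁺)^q a) = 1` for every `q`-dimensional
basis element `a`. -/
def Unital : Prop := ∀ a : K.B,
  K.epsc (K.bdm^[K.dim a] (Finsupp.single a 1)) = 1 ∧
  K.epsc (K.bdp^[K.dim a] (Finsupp.single a 1)) = 1

/-- `K` is loop-free if its basis elements admit a (strict) partial order such that
for every basis element `a` and every `r > 0`, the basis elements occurring in
`(∂⁻)^r a` strictly precede those occurring in `(∂⁺)^r a`. -/
def LoopFree : Prop :=
  ∃ lt : K.B → K.B → Prop, IsStrictOrder K.B lt ∧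
    ∀ (a : K.B) (r : ℕ), 0 < r →
      ∀ b ∈ (K.bdm^[r] (Finsupp.single a 1)).support,
        ∀ b' ∈ (K.bdp^[r] (Finsupp.single a 1)).support, lt b b'

/-- `K` is atomic of dimension `n`. -/
def Atomic (n : ℕ) : Prop :=
  (∀ b : K.B, K.dim b ≤ n) ∧
  (∃! g : K.B, K.dim g = n) ∧
  (∀ b : K.B, K.dim b < n → ∃ a : K.B, K.dim b < K.dim a ∧
    (b ∈ (K.bdm (Finsupp.single a 1)).support ∨ b ∈ (K.bdp (Finsupp.single a 1)).support))

/-- `g_q^α(x)`: given `x_q^- = xq` and `x_{q+1}^α = c`, this is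
`x_q^- + ∂⁺a_1 + … + ∂⁺a_k` where `a_1, …, a_k` are the terms of `c`. -/
noncomputable def gch (xq c : K.B →₀ ℤ) : K.B →₀ ℤ :=
  xq + c.sum fun b n => n • K.bdp (Finsupp.single b 1)

/-- The negative chains `⟨K⟩_q^- = (∂⁻)^{n-q} g` of the canonical atom. -/
noncomputable def atomNeg (g : K.B) (n q : ℕ) : K.B →₀ ℤ :=
  if q ≤ n then K.bdm^[n - q] (Finsupp.single g 1) else 0

/-- The positive chains `⟨K⟩_q^+ = (∂⁺)^{n-q} g` of the canonical atom. -/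
noncomputable def atomPos (g : K.B) (n q : ℕ) : K.B →₀ ℤ :=
  if q ≤ n then K.bdp^[n - q] (Finsupp.single g 1) else 0

end FADC

/-- Membership in `νK`: the double sequence `(x_0^-, x_0^+ | x_1^-, x_1^+ | …)`,
given by `xm` and `xp`, is a member of `νK`. -/
structure NuMem (K : FADC) (xm xp : ℕ → (K.B →₀ ℤ)) : Prop where
  dim_m : ∀ q, ∀ b ∈ (xm q).support, K.dim b = q
  dim_p : ∀ q, ∀ b ∈ (xp q).support, K.dim b = q
  nonneg_m : ∀ q b, 0 ≤ xm q b
  nonneg_p : ∀ q b, 0 ≤ xp q b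
  fin : ∃ n, ∀ q, n < q → xm q = 0 ∧ xp q = 0
  eps_m : K.epsc (xm 0) = 1
  eps_p : K.epsc (xp 0) = 1
  bd_m : ∀ q, K.bdc (xm (q + 1)) = xp q - xm q
  bd_p : ∀ q, K.bdc (xp (q + 1)) = xp q - xm q

/-- `K` together with the class `thin` of thin basis elements is an
`n`-dimensional opetopic directed complex. -/
structure IsODC (K : FADC) (thin : K.B → Prop) (n : ℕ) : Prop where
  atomic : K.Atomic n
  loopFree : K.LoopFree
  unital : K.Unital
  thin_pos : ∀ b, thin b → 0 < K.dim b
  bdp_basis : ∀ b : K.B, 0 < K.dim b →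
    ∃ a : K.B, ¬ thin a ∧ K.bdp (Finsupp.single b 1) = Finsupp.single a 1
  bdm_thin : ∀ b : K.B, thin b →
    ∃ a : K.B, ¬ thin a ∧ K.bdm (Finsupp.single b 1) = Finsupp.single a 1

/-- An opetopic directed complex is reduced if every thin basis element is `∂⁻a`
for some other basis element `a`. -/
def ODCReduced (K : FADC) (thin : K.B → Prop) : Prop :=
  ∀ b, thin b → ∃ a, a ≠ b ∧ K.bdm (Finsupp.single a 1) = Finsupp.single b 1

/-- A network: finite sets of edges and vertices with partially defined source and
target functions; input edges are those with no source, output edges those with no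
target. -/
structure Network where
  E : Type
  V : Type
  finE : Finite E
  finV : Finite V
  src : E → Option V
  tgt : E → Option V

namespace Network

variable (N : Network)

/-- One step of a path: the target of `e` is the source of `e'`. -/
def step (e e' : N.E) : Prop := ∃ v : N.V, N.tgt e = some v ∧ N.src e' = some v

/-- There is a path from `e` to `e'`. -/
def PathTo (e e' : N.E) : Prop := Relation.ReflTransGen N.step e e'

/-- A network is acyclic if there is no nontrivial path from an edge to itself. -/
def Acyclic : Prop := ∀ e : N.E, ¬ Relation.TransGen N.step e e

/-- A network is linear if it is acyclic and consists of a single path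
`e_0, v_1, e_1, …, v_k, e_k`. -/
def Linear : Prop := N.Acyclic ∧
  ∃ (k : ℕ) (e : Fin (k + 1) ≃ N.E) (v : Fin k ≃ N.V),
    N.src (e 0) = none ∧ N.tgt (e (Fin.last k)) = none ∧
    ∀ i : Fin k, N.tgt (e i.castSucc) = some (v i) ∧ N.src (e i.succ) = some (v i)

/-- A network is confluent if it is acyclic, has a unique output edge, and every
vertex is the source of exactly one edge and the target of at least one edge. -/
def Confluent : Prop := N.Acyclic ∧ (∃! e : N.E, N.tgt e = none) ∧
  (∀ v : N.V, ∃! e : N.E, N.src e = some v) ∧ (∀ v : N.V, ∃ e : N.E, N.tgt e = some v)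

end Network

/-- An opetopic network: an acyclic network with a unique output edge, together with
thin edges (which are inputs) and thin vertices (each the target of exactly one edge,
which is not thin). -/
structure OpetopicNetwork extends Network where
  thinE : E → Prop
  thinV : V → Prop
  acyclic : toNetwork.Acyclic
  out_unique : ∃! e : E, tgt e = none
  thinE_input : ∀ e, thinE e → src e = none
  thinV_unique : ∀ v, thinV v → ∃! e, tgt e = some v
  thinV_nonthin : ∀ v e, thinV v → tgt e = some v → ¬ thinE e

/-- An opetopic network is reduced if every thin edge has a target vertex which is
the target of no other edge. -/
def OpetopicNetwork.Reduced (N : OpetopicNetwork) : Prop :=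
  ∀ e, N.thinE e → ∃ v, N.tgt e = some v ∧ ∀ e', N.tgt e' = some v → e' = e

/-- `c` is a constellation from `N` to `P`: a bijection from the vertices of `N` to
the input edges of `P`, preserving thinness, such that for every edge `e` of `P`
there is exactly one edge of `N` with a source but not a target in the preimage of
`I_e` (the input edges of `P` from which there is a path to `e`). -/
def IsConstellation (N P : OpetopicNetwork) (c : N.V → P.E) : Prop :=
  (∀ v, P.src (c v) = none) ∧
  Function.Injective c ∧
  (∀ e : P.E, P.src e = none → ∃ v, c v = e) ∧
  (∀ v, N.thinV v ↔ P.thinE (c v)) ∧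
  (∀ e : P.E, ∃! e' : N.E,
    (∃ v, N.src e' = some v ∧ P.toNetwork.PathTo (c v) e) ∧
    ¬ (∃ v, N.tgt e' = some v ∧ P.toNetwork.PathTo (c v) e))

/-- An `n`-dimensional opetopic sequence `N_0 → N_1 → … → N_n`. -/
structure OpetopicSequence (n : ℕ) where
  N : Fin (n + 1) → OpetopicNetwork
  c : ∀ q : Fin n, (N q.castSucc).V → (N q.succ).E
  constell : ∀ q : Fin n, IsConstellation (N q.castSucc) (N q.succ) (c q)
  linear0 : (N 0).toNetwork.Linear
  noThin0 : ∀ e, ¬ (N 0).thinE e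
  top_single : ∃! _e : (N (Fin.last n)).E, True
  top_noV : IsEmpty (N (Fin.last n)).V

/-- An isomorphism of opetopic sequences: families of bijections on edges and
vertices preserving sources, targets, thin edges and thin vertices, and commuting
with the constellations. -/
def SeqIso (n : ℕ) (S S' : OpetopicSequence n) : Prop :=
  ∃ (fE : ∀ q : Fin (n + 1), (S.N q).E ≃ (S'.N q).E)
    (fV : ∀ q : Fin (n + 1), (S.N q).V ≃ (S'.N q).V),
    (∀ q : Fin (n + 1),
      (∀ e v, (S.N q).src e = some v ↔ (S'.N q).src (fE q e) = some (fV q v)) ∧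
      (∀ e v, (S.N q).tgt e = some v ↔ (S'.N q).tgt (fE q e) = some (fV q v)) ∧
      (∀ e, (S.N q).thinE e ↔ (S'.N q).thinE (fE q e)) ∧
      (∀ v, (S.N q).thinV v ↔ (S'.N q).thinV (fV q v))) ∧
    (∀ q : Fin n, ∀ v, fE q.succ (S.c q v) = S'.c q (fV q.castSucc v))

/-- The opetopic sequence `S` realizes the sequence
`G_0^-(⟨K⟩) → … → G_n^-(⟨K⟩)` associated to the opetopic directed complex `K`
(with top basis element `g` and thin elements `thin`): the edges of `S.N q`
correspond bijectively to the terms of `g_q^-(⟨K⟩)`, the vertices to the terms of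
`⟨K⟩_{q+1}^-`, sources, targets and thinness are as prescribed by `∂⁺`, `∂⁻` and
`thin`, and the constellations are the identity correspondences. -/
def RealizedBy (K : FADC) (thin : K.B → Prop) (n : ℕ) (g : K.B)
    (S : OpetopicSequence n) : Prop :=
  ∃ (eE : ∀ q : Fin (n + 1), (S.N q).E → K.B)
    (eV : ∀ q : Fin (n + 1), (S.N q).V → K.B),
    (∀ q : Fin (n + 1),
      Function.Injective (eE q) ∧
      (∀ ed, eE q ed ∈ (K.gch (K.atomNeg g n q.1) (K.atomNeg g n (q.1 + 1))).support) ∧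
      (∀ b ∈ (K.gch (K.atomNeg g n q.1) (K.atomNeg g n (q.1 + 1))).support,
        ∃ ed, eE q ed = b) ∧
      Function.Injective (eV q) ∧
      (∀ v, eV q v ∈ (K.atomNeg g n (q.1 + 1)).support) ∧
      (∀ b ∈ (K.atomNeg g n (q.1 + 1)).support, ∃ v, eV q v = b) ∧
      (∀ ed v, (S.N q).src ed = some v ↔
        eE q ed ∈ (K.bdp (Finsupp.single (eV q v) 1)).support) ∧
      (∀ ed v, (S.N q).tgt ed = some v ↔
        eE q ed ∈ (K.bdm (Finsupp.single (eV q v) 1)).support) ∧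
      (∀ ed, (S.N q).thinE ed ↔ thin (eE q ed)) ∧
      (∀ v, (S.N q).thinV v ↔ thin (eV q v))) ∧
    (∀ q : Fin n, ∀ v, eE q.succ (S.c q v) = eV q.castSucc v)

/-- A bundled `n`-dimensional opetopic directed complex. -/
structure ODCBundle (n : ℕ) where
  K : FADC
  thin : K.B → Prop
  g : K.B
  dim_g : K.dim g = n
  isODC : IsODC K thin n

/-- Isomorphism of (bundled) opetopic directed complexes: a dimension- and
thinness-preserving bijection of bases commuting with boundaries and augmentations. -/
def ODCIso {n : ℕ} (A A' : ODCBundle n) : Prop :=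
  ∃ φ : A.K.B ≃ A'.K.B,
    (∀ b, A'.K.dim (φ b) = A.K.dim b) ∧
    (∀ b, A'.thin (φ b) ↔ A.thin b) ∧
    (∀ b, A'.K.bd (φ b) = Finsupp.equivMapDomain φ (A.K.bd b)) ∧
    (∀ b, A'.K.eps (φ b) = A.K.eps b)

/-!
By unitality every 1-dimensional basis element `a` is an edge from the vertex `∂⁻a` to the
vertex `∂⁺a`, and `x_0^-`, `x_0^+` are single vertices `s`, `t`; by loop-freeness the vertices
carry a partial order strictly increasing along every edge. So `x_1^α` is a nonnegative integer
combination `c` of edges with `∂c = t - s`. If `c ≠ 0`, then at a minimal source vertex of `c`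
no edge of `c` ends, so `∂c` is nonzero there; hence `s ≠ t`, some edge of `c` ends at `t`, and
removing it leaves a chain with boundary `∂⁻a - s` of smaller weight. Induction on the weight
writes `c` as a path `s = v_0 → v_1 → … → v_k = t`, whose vertices strictly increase and are
therefore distinct.
-/

namespace Finsupp

variable {ι : Type*}

lemma eq_zero_of_nonneg_of_degree_eq_zero {c : ι →₀ ℤ} (hc : 0 ≤ c) (h : c.degree = 0) :
    c = 0 := by
  ext i
  by_cases hi : i ∈ c.support
  · exact (Finset.sum_eq_zero_iff_of_nonneg fun j _ => hc j).mp h i hi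
  · exact notMem_support_iff.mp hi

lemma sub_single_one_nonneg {c : ι →₀ ℤ} (hc : 0 ≤ c) {i : ι} (hi : i ∈ c.support) :
    0 ≤ c - single i 1 := by
  classical
  intro j
  have hci : c i ≠ 0 := mem_support_iff.mp hi
  have hci' : 0 ≤ c i := hc i
  have hcj : 0 ≤ c j := hc j
  rw [coe_zero, Pi.zero_apply, coe_sub, Pi.sub_apply, single_apply]
  split_ifs with h
  · subst h; omega
  · omega

lemma exists_eq_single_of_nonneg_of_degree_eq_one {c : ι →₀ ℤ} (hc : 0 ≤ c)
    (h : c.degree = 1) : ∃ i, c = single i 1 := by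
  obtain ⟨i, hi⟩ : c.support.Nonempty := by
    rw [support_nonempty_iff]
    rintro rfl
    simp at h
  refine ⟨i, sub_eq_zero.mp <| eq_zero_of_nonneg_of_degree_eq_zero (sub_single_one_nonneg hc hi) ?_⟩
  rw [map_sub, h, degree_single, sub_self]

section Paths

variable {V E : Type*} [PartialOrder V] {src tgt : E → V}

lemma mapDomain_ne_of_forall_lt {c : E →₀ ℤ} (hc : 0 ≤ c) (hc0 : c ≠ 0)
    (hlt : ∀ e ∈ c.support, src e < tgt e) : c.mapDomain tgt ≠ c.mapDomain src := by
  classical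
  -- no edge of `c` ends at a minimal source vertex `u`, while some edge starts there
  obtain ⟨u, hu⟩ := Finset.exists_minimal ((support_nonempty_iff.mpr hc0).image src)
  obtain ⟨e₀, he₀, rfl⟩ := Finset.mem_image.mp hu.prop
  have htgt : c.mapDomain tgt (src e₀) = 0 := by
    refine notMem_support_iff.mp fun h => ?_
    obtain ⟨e, he, hte⟩ := Finset.mem_image.mp (mapDomain_support h)
    exact hu.not_lt (Finset.mem_image_of_mem src he) (hte ▸ hlt e he)
  have hsrc : 0 < c.mapDomain src (src e₀) := by
    have herase : 0 ≤ (c.erase e₀).mapDomain src :=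
      mapDomain_nonneg fun i => by rw [erase_apply]; split_ifs; exacts [le_rfl, hc i]
    rw [← single_add_erase e₀ c, mapDomain_add, mapDomain_single, add_apply, single_eq_same]
    have hce₀ : (0 : ℤ) < c e₀ := lt_of_le_of_ne (hc e₀) (mem_support_iff.mp he₀).symm
    have : (0 : ℤ) ≤ _ := herase (src e₀)
    omega
  intro h
  rw [h] at htgt
  omega

lemma exists_mem_support_tgt_eq {c : E →₀ ℤ} (hc : 0 ≤ c) (hc0 : c ≠ 0)
    (hlt : ∀ e ∈ c.support, src e < tgt e) {s t : V}
    (hbd : c.mapDomain tgt - c.mapDomain src = single t 1 - single s 1) :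
    ∃ e ∈ c.support, tgt e = t := by
  classical
  have hst : s ≠ t := by
    rintro rfl
    exact mapDomain_ne_of_forall_lt hc hc0 hlt (sub_eq_zero.mp (hbd.trans (sub_self _)))
  have ht : t ∈ (c.mapDomain tgt).support := by
    have hbdt := DFunLike.congr_fun hbd t
    have : (0 : ℤ) ≤ _ := mapDomain_nonneg (f := src) hc t
    simp only [coe_sub, Pi.sub_apply, single_eq_same, single_eq_of_ne hst.symm] at hbdt
    rw [mem_support_iff]
    omega
  simpa using mapDomain_support ht

lemma exists_path_of_degree_eq [Nonempty E] {s : V} (k : ℕ) :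
    ∀ {c : E →₀ ℤ} {t : V}, 0 ≤ c → c.degree = k → (∀ e ∈ c.support, src e < tgt e) →
      c.mapDomain tgt - c.mapDomain src = single t 1 - single s 1 →
      ∃ (a : ℕ → E) (v : ℕ → V), v 0 = s ∧ v k = t ∧
        (∀ i ∈ Finset.Icc 1 k, a i ∈ c.support ∧ src (a i) = v (i - 1) ∧ tgt (a i) = v i) ∧
        c = ∑ i ∈ Finset.Icc 1 k, single (a i) 1 := by
  classical
  induction k with
  | zero =>
    intro c t hc hdeg _ hbd
    obtain rfl := eq_zero_of_nonneg_of_degree_eq_zero hc hdeg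
    obtain rfl : t = s := by simpa [sub_eq_zero, single_left_inj] using hbd.symm
    exact ⟨fun _ => Classical.arbitrary E, fun _ => t, rfl, rfl, by simp, by simp⟩
  | succ k ih =>
    intro c t hc hdeg hlt hbd
    have hc0 : c ≠ 0 := by rintro rfl; simp only [map_zero] at hdeg; omega
    obtain ⟨e, he, rfl⟩ := exists_mem_support_tgt_eq hc hc0 hlt hbd
    have hsub : (c - single e 1).support ⊆ c.support := support_sub.trans <|
      Finset.union_subset le_rfl (support_single_subset.trans (by simpa using he))
    obtain ⟨a, v, hv0, hvk, hpath, hsum⟩ := ih (t := src e) (sub_single_one_nonneg hc he)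
      (by rw [map_sub, hdeg, degree_single]; push_cast; ring) (fun e' he' => hlt e' (hsub he'))
      (by rw [mapDomain_sub, mapDomain_sub, mapDomain_single, mapDomain_single,
        sub_sub_sub_comm, hbd]; abel)
    refine ⟨Function.update a (k + 1) e, Function.update v (k + 1) (tgt e), ?_, by simp, ?_, ?_⟩
    · rwa [Function.update_of_ne (by omega)]
    · intro i hi
      obtain ⟨hi1, hik⟩ := Finset.mem_Icc.mp hi
      rcases eq_or_lt_of_le hik with rfl | hik
      · simp [Function.update_of_ne, he, hvk]
      · obtain ⟨hai, hsrc, htgt⟩ := hpath i (Finset.mem_Icc.mpr ⟨hi1, by omega⟩)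
        simp only [Function.update_of_ne (show i ≠ k + 1 by omega),
          Function.update_of_ne (show i - 1 ≠ k + 1 by omega)]
        exact ⟨hsub hai, hsrc, htgt⟩
    · rw [Finset.sum_Icc_succ_top (by omega), Function.update_self]
      rw [Finset.sum_congr rfl fun i hi => by
        rw [Function.update_of_ne (by simp at hi; omega)], ← hsum, sub_add_cancel]

theorem exists_strictMonoOn_path_of_mapDomain_sub_eq [Nonempty E] {c : E →₀ ℤ} (hc : 0 ≤ c)
    (hlt : ∀ e ∈ c.support, src e < tgt e) {s t : V}
    (hbd : c.mapDomain tgt - c.mapDomain src = single t 1 - single s 1) :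
    ∃ (k : ℕ) (a : ℕ → E) (v : ℕ → V), v 0 = s ∧ v k = t ∧ StrictMonoOn v (Set.Iic k) ∧
      (∀ i ∈ Finset.Icc 1 k, a i ∈ c.support ∧ src (a i) = v (i - 1) ∧ tgt (a i) = v i) ∧
      c = ∑ i ∈ Finset.Icc 1 k, single (a i) 1 := by
  obtain ⟨k, hk⟩ : ∃ k : ℕ, c.degree = k :=
    ⟨c.degree.toNat, (Int.toNat_of_nonneg (Finset.sum_nonneg fun i _ => hc i)).symm⟩
  obtain ⟨a, v, hv0, hvk, hpath, hsum⟩ := exists_path_of_degree_eq k hc hk hlt hbd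
  refine ⟨k, a, v, hv0, hvk, strictMonoOn_Iic_of_lt_succ fun i hi => ?_, hpath, hsum⟩
  obtain ⟨he, hsrc, htgt⟩ := hpath (i + 1) (Finset.mem_Icc.mpr ⟨by omega, hi⟩)
  rw [Order.succ_eq_add_one, ← htgt, ← Nat.add_sub_cancel i 1, ← hsrc]
  exact hlt _ he

end Paths

end Finsupp

namespace FADC

variable {K : FADC}

lemma bdc_single (a : K.B) : K.bdc (single a 1) = K.bd a := by
  rw [bdc, sum_single_index (by simp), one_smul]

lemma bdp_sub_bdm (c : K.B →₀ ℤ) : K.bdp c - K.bdm c = K.bdc c := by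
  ext b
  simp only [bdp, bdm, coe_sub, Pi.sub_apply, mapRange_apply, Finsupp.neg_apply]
  omega

lemma bdp_nonneg (c : K.B →₀ ℤ) : 0 ≤ K.bdp c := fun b => by simp [bdp]

lemma bdm_nonneg (c : K.B →₀ ℤ) : 0 ≤ K.bdm c := fun b => by simp [bdm]

lemma dim_add_one_of_mem_support_bdp {a b : K.B} (hb : b ∈ (K.bdp (single a 1)).support) :
    K.dim b + 1 = K.dim a := by
  refine K.bd_dim a b ?_
  simp only [bdp, mem_support_iff, mapRange_apply, bdc_single] at hb ⊢
  omega

lemma dim_add_one_of_mem_support_bdm {a b : K.B} (hb : b ∈ (K.bdm (single a 1)).support) :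
    K.dim b + 1 = K.dim a := by
  refine K.bd_dim a b ?_
  simp only [bdm, mem_support_iff, mapRange_apply, Finsupp.neg_apply, bdc_single] at hb ⊢
  omega

lemma Unital.eps_eq_one (hU : K.Unital) {b : K.B} (hb : K.dim b = 0) : K.eps b = 1 := by
  simpa [hb, epsc, sum_single_index] using (hU b).1

lemma Unital.exists_eq_single (hU : K.Unital) {c : K.B →₀ ℤ} (hc : 0 ≤ c)
    (hdim : ∀ b ∈ c.support, K.dim b = 0) (heps : K.epsc c = 1) : ∃ s, c = single s 1 := by
  refine exists_eq_single_of_nonneg_of_degree_eq_one hc ?_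
  rw [← heps, epsc, degree_apply, Finsupp.sum]
  exact Finset.sum_congr rfl fun b hb => by rw [hU.eps_eq_one (hdim b hb), mul_one]

lemma Unital.exists_bdm_eq_single (hU : K.Unital) {a : K.B} (ha : K.dim a = 1) :
    ∃ s, K.bdm (single a 1) = single s 1 :=
  hU.exists_eq_single (bdm_nonneg _)
    (fun b hb => by have := dim_add_one_of_mem_support_bdm hb; omega)
    (by simpa [ha] using (hU a).1)

lemma Unital.exists_bdp_eq_single (hU : K.Unital) {a : K.B} (ha : K.dim a = 1) :
    ∃ t, K.bdp (single a 1) = single t 1 :=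
  hU.exists_eq_single (bdp_nonneg _)
    (fun b hb => by have := dim_add_one_of_mem_support_bdp hb; omega)
    (by simpa [ha] using (hU a).2)

lemma LoopFree.exists_partialOrder (hLF : K.LoopFree) :
    ∃ _ : PartialOrder K.B, ∀ a s t, K.bdm (single a 1) = single s 1 →
      K.bdp (single a 1) = single t 1 → s < t := by
  obtain ⟨lt, _, hlt⟩ := hLF
  exact ⟨partialOrderOfSO lt, fun a s t hs ht =>
    hlt a 1 one_pos s (by simp [hs]) t (by simp [ht])⟩

lemma bdc_eq_mapDomain_sub {src tgt : K.B → K.B} {c : K.B →₀ ℤ}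
    (hsrc : ∀ a ∈ c.support, K.bdm (single a 1) = single (src a) 1)
    (htgt : ∀ a ∈ c.support, K.bdp (single a 1) = single (tgt a) 1) :
    K.bdc c = c.mapDomain tgt - c.mapDomain src := by
  rw [bdc, mapDomain, mapDomain, ← sum_sub]
  refine sum_congr fun a ha => ?_
  rw [← bdc_single, ← bdp_sub_bdm, hsrc a ha, htgt a ha, smul_sub, smul_single_one,
    smul_single_one]

lemma gch_sum_single (xq : K.B →₀ ℤ) (s : Finset ℕ) (a : ℕ → K.B) :
    K.gch xq (∑ i ∈ s, single (a i) 1) = xq + ∑ i ∈ s, K.bdp (single (a i) 1) := by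
  rw [gch, ← sum_finsetSum_index (h := fun b n => n • K.bdp (single b 1))
    (fun _ => zero_smul ℤ _) fun _ _ _ => add_smul _ _ _]
  simp [sum_single_index]

theorem exists_path_of_bdc_eq (hLF : K.LoopFree) (hU : K.Unital) {c : K.B →₀ ℤ} (hc : 0 ≤ c)
    (hdim : ∀ a ∈ c.support, K.dim a = 1) {s t : K.B}
    (hbd : K.bdc c = single t 1 - single s 1) :
    ∃ (k : ℕ) (a : ℕ → K.B) (v : ℕ → K.B), v 0 = s ∧ v k = t ∧ Set.InjOn v (Set.Iic k) ∧
      (∀ i ∈ Finset.Icc 1 k, K.dim (a i) = 1 ∧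
        K.bdm (single (a i) 1) = single (v (i - 1)) 1 ∧ K.bdp (single (a i) 1) = single (v i) 1) ∧
      c = ∑ i ∈ Finset.Icc 1 k, single (a i) 1 := by
  obtain ⟨_, hlt⟩ := hLF.exists_partialOrder
  choose! src hsrc using fun a (ha : K.dim a = 1) => hU.exists_bdm_eq_single ha
  choose! tgt htgt using fun a (ha : K.dim a = 1) => hU.exists_bdp_eq_single ha
  replace hsrc : ∀ a ∈ c.support, _ := fun a ha => hsrc a (hdim a ha)
  replace htgt : ∀ a ∈ c.support, _ := fun a ha => htgt a (hdim a ha)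
  have : Nonempty K.B := ⟨s⟩
  obtain ⟨k, a, v, hv0, hvk, hmono, hpath, hsum⟩ :=
    exists_strictMonoOn_path_of_mapDomain_sub_eq hc (fun a ha => hlt a _ _ (hsrc a ha) (htgt a ha))
      ((bdc_eq_mapDomain_sub hsrc htgt).symm.trans hbd)
  refine ⟨k, a, v, hv0, hvk, hmono.injOn, fun i hi => ?_, hsum⟩
  obtain ⟨ha, hs, ht⟩ := hpath i hi
  exact ⟨hdim _ ha, hs ▸ hsrc _ ha, ht ▸ htgt _ ha⟩

end FADC

/-- The network `G_0^α(x)` is linear: `x_1^α` is a sum of distinct `1`-dimensional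
basis elements `a_1, …, a_k` with `∂⁻a_1 = x_0^-`, `∂⁺a_i = ∂⁻a_{i+1}` and
`∂⁺a_k = x_0^+`, each `∂⁻a_i` and `∂⁺a_i` being a single basis element, and the
`k+1` basis chains `x_0^-, ∂⁺a_1, …, ∂⁺a_k` are pairwise distinct and are exactly
the terms of `g_0^α(x)`. -/
theorem stmt11 (K : FADC) (hLF : K.LoopFree) (hU : K.Unital)
    (xm xp : ℕ → (K.B →₀ ℤ)) (hx : NuMem K xm xp)
    (xa : ℕ → K.B →₀ ℤ) (hxa : xa = xm ∨ xa = xp) :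
    ∃ (k : ℕ) (a : ℕ → K.B),
      (∀ i, 1 ≤ i → i ≤ k → K.dim (a i) = 1) ∧
      (∀ i j, 1 ≤ i → i ≤ k → 1 ≤ j → j ≤ k → a i = a j → i = j) ∧
      xa 1 = ∑ i ∈ Finset.Icc 1 k, Finsupp.single (a i) 1 ∧
      (∀ i, 1 ≤ i → i ≤ k →
        (∃ b : K.B, K.bdm (Finsupp.single (a i) 1) = Finsupp.single b 1) ∧
        (∃ b : K.B, K.bdp (Finsupp.single (a i) 1) = Finsupp.single b 1)) ∧
      (1 ≤ k → K.bdm (Finsupp.single (a 1) 1) = xm 0) ∧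
      (∀ i, 1 ≤ i → i < k →
        K.bdp (Finsupp.single (a i) 1) = K.bdm (Finsupp.single (a (i + 1)) 1)) ∧
      (1 ≤ k → K.bdp (Finsupp.single (a k) 1) = xp 0) ∧
      ∃ E : ℕ → (K.B →₀ ℤ),
        E 0 = xm 0 ∧
        (∀ i, 1 ≤ i → i ≤ k → E i = K.bdp (Finsupp.single (a i) 1)) ∧
        (∀ i j, i ≤ k → j ≤ k → E i = E j → i = j) ∧
        K.gch (xm 0) (xa 1) = ∑ i ∈ Finset.range (k + 1), E i := by
  obtain ⟨hnn, hdim, hbd⟩ : 0 ≤ xa 1 ∧ (∀ b ∈ (xa 1).support, K.dim b = 1) ∧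
      K.bdc (xa 1) = xp 0 - xm 0 := by
    rcases hxa with rfl | rfl
    exacts [⟨hx.nonneg_m 1, hx.dim_m 1, hx.bd_m 0⟩, ⟨hx.nonneg_p 1, hx.dim_p 1, hx.bd_p 0⟩]
  obtain ⟨s, hs⟩ := hU.exists_eq_single (hx.nonneg_m 0) (hx.dim_m 0) hx.eps_m
  obtain ⟨t, ht⟩ := hU.exists_eq_single (hx.nonneg_p 0) (hx.dim_p 0) hx.eps_p
  obtain ⟨k, a, v, hv0, hvk, hinj, hpath, hsum⟩ :=
    FADC.exists_path_of_bdc_eq hLF hU hnn hdim (by rw [hbd, hs, ht])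
  have hpath' := fun i (h1 : 1 ≤ i) (h2 : i ≤ k) => hpath i (Finset.mem_Icc.mpr ⟨h1, h2⟩)
  have hvinj : ∀ i j, i ≤ k → j ≤ k → single (v i) (1 : ℤ) = single (v j) 1 → i = j :=
    fun i j hi hj h => hinj hi hj ((single_left_inj one_ne_zero).mp h)
  refine ⟨k, a, fun i h1 h2 => (hpath' i h1 h2).1, fun i j hi1 hi2 hj1 hj2 hij => ?_, hsum,
    fun i h1 h2 => ⟨⟨_, (hpath' i h1 h2).2.1⟩, ⟨_, (hpath' i h1 h2).2.2⟩⟩, fun hk => ?_,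
    fun i h1 h2 => ?_, fun hk => ?_, fun i => single (v i) 1, hs ▸ hv0 ▸ rfl,
    fun i h1 h2 => (hpath' i h1 h2).2.2.symm, hvinj, ?_⟩
  · exact hvinj i j hi2 hj2 (by rw [← (hpath' i hi1 hi2).2.2, ← (hpath' j hj1 hj2).2.2, hij])
  · rw [(hpath' 1 le_rfl hk).2.1, hv0, hs]
  · rw [(hpath' i h1 h2.le).2.2, (hpath' (i + 1) (by omega) h2).2.1, Nat.add_sub_cancel]
  · rw [(hpath' k hk le_rfl).2.2, hvk, ht]
  · rw [hsum, FADC.gch_sum_single, Finset.sum_congr rfl fun i hi => (hpath i hi).2.2, hs, ← hv0,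
      Finset.range_eq_Ico, Finset.sum_eq_sum_Ico_succ_bot (by omega)]
    rfl
end

section
/- Every network N_q appearing in an n-dimensional opetopic sequence N_0 → N_1 → … → N_n is confluent. -/
open Finsupp

/-!
Each network `N_q` but the last has a constellation `c : N_q → N_{q+1}`, and the last has no
vertices. Since `c v` is an input edge, `c v` is reached only from itself, so the constellation
condition at `c v` yields an edge with source `v`; any second such edge would also have to end
at `v`, a loop. For a vertex `w` of `N_{q+1}` with outgoing edge `e`, the constellation
condition at `e` gives a path from an input edge to `e`, whose last step enters `w`. In the
linear network `N_0` each vertex `v_i` is the target of `e_{i-1}`.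
-/

namespace IsConstellation

variable {N P : OpetopicNetwork} {c : N.V → P.E}

theorem eq_of_pathTo (h : IsConstellation N P c) {u v : N.V}
    (hp : P.PathTo (c u) (c v)) : u = v := by
  rcases Relation.ReflTransGen.cases_tail hp with heq | ⟨_, _, x, _, hsx⟩
  · exact h.2.1 heq.symm
  · rw [h.1 v] at hsx
    exact absurd hsx.symm (Option.some_ne_none x)

theorem existsUnique_src (h : IsConstellation N P c) (v : N.V) :
    ∃! e : N.E, N.src e = some v := by
  obtain ⟨e, ⟨⟨u, hu, hp⟩, -⟩, huniq⟩ := h.2.2.2.2 (c v)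
  obtain rfl : u = v := h.eq_of_pathTo hp
  refine ⟨e, hu, fun e' he' => huniq e' ⟨⟨u, he', .refl⟩, ?_⟩⟩
  rintro ⟨w, hw, hpw⟩
  obtain rfl : w = u := h.eq_of_pathTo hpw
  exact N.acyclic e' (.single ⟨w, hw, he'⟩)

theorem exists_tgt_of_src (h : IsConstellation N P c) {w : P.V} {e : P.E}
    (he : P.src e = some w) : ∃ e' : P.E, P.tgt e' = some w := by
  obtain ⟨-, ⟨⟨u, -, hp⟩, -⟩, -⟩ := h.2.2.2.2 e
  rcases Relation.ReflTransGen.cases_tail hp with heq | ⟨b, -, x, hbx, hsx⟩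
  · have hu := h.1 u
    rw [← heq, he] at hu
    exact absurd hu (Option.some_ne_none w)
  · rw [he, Option.some_inj] at hsx
    exact ⟨b, hsx ▸ hbx⟩

end IsConstellation

theorem Network.Linear.exists_tgt {N : Network} (h : N.Linear) (w : N.V) :
    ∃ e : N.E, N.tgt e = some w := by
  obtain ⟨-, k, e, v, -, -, hpath⟩ := h
  exact ⟨e (v.symm w).castSucc, by rw [(hpath (v.symm w)).1, v.apply_symm_apply]⟩

namespace OpetopicSequence

variable {n : ℕ} (S : OpetopicSequence n)

theorem existsUnique_src (q : Fin (n + 1)) (v : (S.N q).V) :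
    ∃! e, (S.N q).src e = some v := by
  rcases Fin.eq_castSucc_or_eq_last q with ⟨p, rfl⟩ | rfl
  · exact (S.constell p).existsUnique_src v
  · exact (S.top_noV.false v).elim

theorem exists_tgt (q : Fin (n + 1)) (w : (S.N q).V) :
    ∃ e, (S.N q).tgt e = some w := by
  rcases Fin.eq_zero_or_eq_succ q with rfl | ⟨p, rfl⟩
  · exact S.linear0.exists_tgt w
  · obtain ⟨e, he, -⟩ := S.existsUnique_src p.succ w
    exact (S.constell p).exists_tgt_of_src he

end OpetopicSequence

/-- Proposition 3.9: every network in an opetopic sequence is confluent. -/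
theorem stmt13 (n : ℕ) (S : OpetopicSequence n) (q : Fin (n + 1)) :
    (S.N q).toNetwork.Confluent :=
  ⟨(S.N q).acyclic, (S.N q).out_unique, S.existsUnique_src q, S.exists_tgt q⟩
end
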